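/- Let J be a finite group and M a finitely generated J-module that is free as a ℤ-module with M^J = 0. If Y is a J-submodule of M such that J acts trivially on the quotient M/Y, then M/Y is isomorphic to a subgroup of the first group cohomology H¹(J,Y); in particular M/Y is finite. -/

import Mathlib

variable (J M Y : Type) [Group J] [AddCommGroup M] [DistribMulAction J M]
  [AddCommGroup Y] [DistribMulAction J Y]

/-- The subgroup `M^J` of `J`-invariants of `M`. -/
def invariants : AddSubgroup M where
  carrier := {m | ∀ σ : J, σ • m = m}
  add_mem' := by
    intro a b ha hb σ
    rw [smul_add, ha σ, hb σ]
  zero_mem' := fun σ => smul_zero σ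
  neg_mem' := by
    intro a ha σ
    rw [smul_neg, ha σ]

instance : SMulCommClass J ℤ Y :=
  ⟨fun g n m => ((DistribMulAction.toAddMonoidHom Y g).map_zsmul n m)⟩

/-! The cocycle `σ ↦ i⁻¹(σ • m - m)` defines a homomorphism `M → H¹(J, Y)`, the connecting map
of `0 → Y → M → M/Y → 0` restricted to `(M/Y)^J = M/Y`. Its kernel consists of the `m` with
`m - i y` invariant for some `y`, which is `i(Y)` since `M^J = 0`. Finiteness: `∑ σ, σ • m` is
invariant, hence `0`, so `|J| • m ≡ ∑ σ, σ • m = 0` modulo `Y`; thus `M/Y` is a finitely generated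
torsion group. -/

open groupCohomology

section

variable {J M Y}

theorem sum_smul_mem_invariants [Fintype J] (m : M) : ∑ σ : J, σ • m ∈ invariants J M := by
  intro τ
  rw [Finset.smul_sum]
  simp_rw [← mul_smul]
  exact Fintype.sum_equiv (Equiv.mulLeft τ) _ _ fun _ => rfl

theorem card_nsmul_mem_of_invariants_eq_bot [Finite J] (hMJ : invariants J M = ⊥)
    (N : AddSubgroup M) (hN : ∀ (σ : J) (m : M), σ • m - m ∈ N) (m : M) :
    Nat.card J • m ∈ N := by
  have := Fintype.ofFinite J
  have hsum : ∑ σ : J, σ • m = 0 := by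
    simpa [hMJ] using sum_smul_mem_invariants (J := J) m
  have hcard : Nat.card J • m = -∑ σ : J, (σ • m - m) := by
    rw [Finset.sum_sub_distrib, hsum, Finset.sum_const, Finset.card_univ,
      Nat.card_eq_fintype_card]
    abel
  rw [hcard]
  exact neg_mem (sum_mem fun σ _ => hN σ m)

theorem finite_quotient_of_invariants_eq_bot [Finite J] [AddGroup.FG M]
    (hMJ : invariants J M = ⊥) (N : AddSubgroup M) (hN : ∀ (σ : J) (m : M), σ • m - m ∈ N) :
    Finite (M ⧸ N) := by
  have : AddGroup.FG (M ⧸ N) := AddGroup.fg_of_surjective (QuotientAddGroup.mk'_surjective N)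
  refine AddCommGroup.finite_of_fg_isAddTorsion _ fun q => ?_
  induction q using QuotientAddGroup.induction_on with
  | H m =>
    refine isOfFinAddOrder_iff_nsmul_eq_zero.2 ⟨Nat.card J, Nat.card_pos, ?_⟩
    rw [← QuotientAddGroup.mk_nsmul, QuotientAddGroup.eq_zero_iff]
    exact card_nsmul_mem_of_invariants_eq_bot hMJ N hN m

theorem isCoboundary₁_iff_mem_coboundaries₁ (f : J → Y) :
    IsCoboundary₁ f ↔ f ∈ coboundaries₁ (Rep.ofDistribMulAction ℤ J Y) :=
  ⟨fun hf => (coboundariesOfIsCoboundary₁ hf).2, isCoboundary₁_of_mem_coboundaries₁ f⟩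

section Connecting

variable {i : Y →+ M} (hi : Function.Injective i)
  (htriv : ∀ (σ : J) (m : M), σ • m - m ∈ i.range) (hequiv : ∀ (σ : J) (y : Y), i (σ • y) = σ • i y)

noncomputable def connectingCocycle (m : M) : cocycles₁ (Rep.ofDistribMulAction ℤ J Y) :=
  cocyclesOfIsCocycle₁ (f := fun σ => (AddMonoidHom.ofInjective hi).symm ⟨σ • m - m, htriv σ m⟩)
    fun σ τ => hi <| by
      simp only [map_add, hequiv, AddMonoidHom.apply_ofInjective_symm, smul_sub, mul_smul]
      abel

theorem apply_connectingCocycle (m : M) (σ : J) :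
    i (connectingCocycle hi htriv hequiv m σ) = σ • m - m :=
  AddMonoidHom.apply_ofInjective_symm hi _

theorem connectingCocycle_add (a b : M) :
    connectingCocycle hi htriv hequiv (a + b) =
      connectingCocycle hi htriv hequiv a + connectingCocycle hi htriv hequiv b := by
  ext σ
  refine hi ?_
  calc i (connectingCocycle hi htriv hequiv (a + b) σ)
      = σ • (a + b) - (a + b) := apply_connectingCocycle ..
    _ = i (connectingCocycle hi htriv hequiv a σ) + i (connectingCocycle hi htriv hequiv b σ) := by
      rw [apply_connectingCocycle, apply_connectingCocycle, smul_add]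
      abel
    _ = i ((connectingCocycle hi htriv hequiv a + connectingCocycle hi htriv hequiv b) σ) :=
      (map_add i _ _).symm

noncomputable def connectingHom : M →+ H1 (Rep.ofDistribMulAction ℤ J Y) :=
  (H1π _).hom.toAddMonoidHom.comp
    (AddMonoidHom.mk' (connectingCocycle hi htriv hequiv) (connectingCocycle_add hi htriv hequiv))

theorem connectingHom_eq_zero_iff (m : M) :
    connectingHom hi htriv hequiv m = 0 ↔ ∃ y : Y, m - i y ∈ invariants J M := by
  change H1π _ (connectingCocycle hi htriv hequiv m) = 0 ↔ _
  rw [H1π_eq_zero_iff]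
  refine (isCoboundary₁_iff_mem_coboundaries₁ (Y := Y) _).symm.trans ?_
  refine exists_congr fun y => forall_congr' fun σ => ?_
  refine (hi.eq_iff (b := connectingCocycle hi htriv hequiv m σ)).symm.trans ?_
  rw [map_sub, hequiv, apply_connectingCocycle, eq_comm, sub_eq_sub_iff_sub_eq_sub, smul_sub]

theorem ker_connectingHom (hMJ : invariants J M = ⊥) :
    (connectingHom hi htriv hequiv).ker = i.range := by
  ext m
  rw [AddMonoidHom.mem_ker, connectingHom_eq_zero_iff, hMJ]
  simp only [AddSubgroup.mem_bot, sub_eq_zero, AddMonoidHom.mem_range]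
  exact exists_congr fun _ => eq_comm

end Connecting

end

theorem quotient_embeds_in_H1 [Finite J] [Module.Finite ℤ M]
    (hMJ : invariants J M = ⊥)
    (i : Y →+ M) (hi : Function.Injective i)
    (hequiv : ∀ (σ : J) (y : Y), i (σ • y) = σ • i y)
    (htriv : ∀ (σ : J) (m : M), σ • m - m ∈ i.range) :
    (∃ f : (M ⧸ i.range) →+
        groupCohomology.H1 (Rep.of (Representation.ofDistribMulAction ℤ J Y)),
      Function.Injective f) ∧
    Finite (M ⧸ i.range) := by
  have hker := ker_connectingHom hi htriv hequiv hMJ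
  have : AddGroup.FG M := Module.Finite.iff_addGroup_fg.1 ‹_›
  refine ⟨⟨QuotientAddGroup.lift _ (connectingHom hi htriv hequiv) hker.ge, ?_⟩,
    finite_quotient_of_invariants_eq_bot hMJ _ htriv⟩
  exact (QuotientAddGroup.injective_lift_iff _ _ _).2 hker.symm
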